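/- Let L be a nonempty compact convex set in ℝⁿ, let 1 ≤ d < n, and let Q be a polytope in ℝⁿ having at most d+1 vertices (the convex hull of at most d+1 points). Suppose that for every d-dimensional linear subspace ξ of ℝⁿ there exists v ∈ ξ such that Q_ξ + v ⊆ L_ξ, where Q_ξ and L_ξ denote the orthogonal projections of Q and L onto ξ. Then there exists v₀ ∈ ℝⁿ such that Q + v₀ ⊆ L. -/

import Mathlib

/-!
Let `s` be the vertex set of `Q` and `T q = L - q`; we need a common point of the sets `T q`.
If there is none, the function `v ↦ max_q dist(v, T q)` attains a positive minimum `r` at some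
`v₀`. For each vertex attaining `r`, let `u_q = v₀ - p_q`, where `p_q` is the point of `T q`
nearest to `v₀`; then `T q` lies in the open half-space `⟪u_q, · - v₀⟫ < 0`. Moreover `0` is a
convex combination of these `u_q`: otherwise some direction `e` has `⟪u_q, e⟫ < 0` for all of them,
and moving `v₀` along `e` would lower the maximum. So the `u_q` span a subspace of dimension at
most `|s| - 1 ≤ d`, contained in a `d`-dimensional `ξ`. The shadow hypothesis for `ξ` yields a
point `v` in all projections of the `T q` onto `ξ`; since the `u_q` lie in `ξ`, this forces
`⟪u_q, v - v₀⟫ < 0` for every `q`, contradicting `0 ∈ conv {u_q}`.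
-/

open Set

/-- The orthogonal projection of `ℝⁿ` onto a subspace `ξ`, viewed as a map `ℝⁿ → ℝⁿ`. -/
noncomputable def projSub {n : ℕ} (ξ : Submodule ℝ (EuclideanSpace ℝ (Fin n)))
    (x : EuclideanSpace ℝ (Fin n)) : EuclideanSpace ℝ (Fin n) :=
  (Submodule.orthogonalProjectionOnto ξ x : EuclideanSpace ℝ (Fin n))

/-- The orthogonal projection of `ℝⁿ` onto the hyperplane `u^⊥`. -/
noncomputable def projHyp {n : ℕ} (u : EuclideanSpace ℝ (Fin n)) :
    EuclideanSpace ℝ (Fin n) → EuclideanSpace ℝ (Fin n) :=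
  projSub ((Submodule.span ℝ {u})ᗮ)

/-- `IsSimplex n Δ` : `Δ` is an `n`-simplex in `ℝⁿ`, i.e. the convex hull of
`n+1` affinely independent points. -/
def IsSimplex (n : ℕ) (Δ : Set (EuclideanSpace ℝ (Fin n))) : Prop :=
  ∃ p : Fin (n + 1) → EuclideanSpace ℝ (Fin n),
    AffineIndependent ℝ p ∧ Δ = convexHull ℝ (Set.range p)

open Module Metric Filter Topology RealInnerProductSpace

theorem Submodule.exists_le_finrank_eq {K V : Type*} [DivisionRing K] [AddCommGroup V]
    [Module K V] [FiniteDimensional K V] (W : Submodule K V) {d : ℕ}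
    (hWd : finrank K W ≤ d) (hd : d ≤ finrank K V) :
    ∃ ξ : Submodule K V, W ≤ ξ ∧ finrank K ξ = d := by
  obtain ⟨k, rfl⟩ := Nat.exists_eq_add_of_le hWd
  induction k generalizing W with
  | zero => exact ⟨W, le_rfl, rfl⟩
  | succ k ih =>
    obtain ⟨x, -, hx⟩ := SetLike.exists_of_lt (W.lt_top_of_finrank_lt_finrank (by omega))
    obtain ⟨ξ, hle, hξ⟩ := ih (W ⊔ K ∙ x) (by rw [finrank_sup_span_singleton hx]; omega)
      (by rw [finrank_sup_span_singleton hx]; omega)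
    exact ⟨ξ, le_sup_left.trans hle, by rw [hξ, finrank_sup_span_singleton hx]; omega⟩

theorem finrank_span_lt_card_of_zero_mem_affineSpan {k V : Type*} [DivisionRing k]
    [AddCommGroup V] [Module k V] {U : Finset V}
    (h : (0 : V) ∈ affineSpan k (U : Set V)) :
    finrank k (Submodule.span k (U : Set V)) < U.card := by
  classical
  obtain ⟨m, hm⟩ : ∃ m, U.card = m + 1 := Nat.exists_eq_succ_of_ne_zero fun hU => by
    rw [Finset.card_eq_zero.1 hU, Finset.coe_empty, AffineSubspace.span_empty] at h
    exact AffineSubspace.notMem_bot k V _ h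
  have hspan : Submodule.span k (U : Set V) ≤ vectorSpan k (U : Set V) := by
    refine Submodule.span_le.2 fun u hu => ?_
    simpa [direction_affineSpan] using
      AffineSubspace.vsub_mem_direction (mem_affineSpan k hu) h
  have := finiteDimensional_vectorSpan_of_finite k U.finite_toSet
  have hle := finrank_vectorSpan_image_finset_le k id U hm
  rw [Finset.image_id] at hle
  exact hm ▸ Nat.lt_succ_of_le ((Submodule.finrank_mono hspan).trans hle)

theorem exists_forall_sup'_infDist_le {ι α : Type*} [PseudoMetricSpace α] [ProperSpace α]
    {s : Finset ι} (hs : s.Nonempty) {T : ι → Set α} (hT : ∀ i, IsCompact (T i))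
    (hne : ∀ i, (T i).Nonempty) :
    ∃ v₀, ∀ v, s.sup' hs (fun i => infDist v₀ (T i)) ≤ s.sup' hs (fun i => infDist v (T i)) := by
  have ⟨i₀, hi₀⟩ := hs
  obtain ⟨x₀, -⟩ := hne i₀
  refine Continuous.exists_forall_le_of_isBounded
    (Continuous.finset_sup'_apply _ fun i _ => continuous_infDist_pt _) x₀
    (((hT i₀).isBounded.cthickening (δ := s.sup' hs fun i => infDist x₀ (T i))).subset ?_)
  intro v hv
  obtain ⟨y, hy, hdist⟩ := (hT i₀).exists_infDist_eq_dist (hne i₀) v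
  exact mem_cthickening_of_dist_le v y _ _ hy
    (hdist ▸ (Finset.le_sup' (fun i => infDist v (T i)) hi₀).trans hv)

section InnerProductSpace

variable {E : Type*} [NormedAddCommGroup E] [InnerProductSpace ℝ E] {ι : Type*}

theorem eventually_norm_add_smul_lt {x e : E} (h : ⟪x, e⟫ < 0) :
    ∀ᶠ t in 𝓝[>] (0 : ℝ), ‖x + t • e‖ < ‖x‖ := by
  have hsq (t : ℝ) : ‖x + t • e‖ ^ 2 = ‖x‖ ^ 2 + t * (2 * ⟪x, e⟫ + t * ‖e‖ ^ 2) := by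
    rw [norm_add_sq_real, inner_smul_right, norm_smul, mul_pow, Real.norm_eq_abs, sq_abs]
    ring
  have hlim : Tendsto (fun t : ℝ => 2 * ⟪x, e⟫ + t * ‖e‖ ^ 2) (𝓝[>] 0) (𝓝 (2 * ⟪x, e⟫)) := by
    refine (Continuous.tendsto' ?_ 0 _ ?_).mono_left nhdsWithin_le_nhds
    · fun_prop
    · simp
  filter_upwards [self_mem_nhdsWithin, hlim.eventually (gt_mem_nhds (by linarith))]
    with t (ht : 0 < t) hneg
  rw [← sq_lt_sq₀ (norm_nonneg _) (norm_nonneg _), hsq]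
  nlinarith

theorem inner_sub_neg_of_dist_eq_infDist {K : Set E} (hK : Convex ℝ K) {v p : E}
    (hp : p ∈ K) (h : dist v p = infDist v K) (hvp : v ≠ p) {x : E} (hx : x ∈ K) :
    ⟪v - p, x - v⟫ < 0 := by
  have hobtuse : ⟪v - p, x - p⟫ ≤ 0 := by
    refine (norm_eq_iInf_iff_real_inner_le_zero hK hp).mp ?_ x hx
    simp only [← dist_eq_norm, h, infDist_eq_iInf]
  have hpos : 0 < ‖v - p‖ := norm_pos_iff.2 (sub_ne_zero.2 hvp)
  calc ⟪v - p, x - v⟫ = ⟪v - p, x - p⟫ - ‖v - p‖ ^ 2 := by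
        rw [← real_inner_self_eq_norm_sq, ← inner_sub_right, sub_sub_sub_cancel_right]
    _ < 0 := by nlinarith

theorem eventually_infDist_add_smul_lt {K : Set E} {v p e : E} (hp : p ∈ K)
    (hd : infDist v K = dist v p) (h : ⟪v - p, e⟫ < 0) :
    ∀ᶠ t in 𝓝[>] (0 : ℝ), infDist (v + t • e) K < infDist v K := by
  filter_upwards [eventually_norm_add_smul_lt h] with t ht
  calc infDist (v + t • e) K ≤ dist (v + t • e) p := infDist_le_dist_of_mem hp
    _ = ‖v - p + t • e‖ := by rw [dist_eq_norm, sub_add_eq_add_sub]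
    _ < ‖v - p‖ := ht
    _ = infDist v K := by rw [hd, dist_eq_norm]

theorem exists_forall_inner_neg_of_zero_notMem [CompleteSpace E] {S : Set E}
    (hconv : Convex ℝ S) (hclosed : IsClosed S) (h0 : (0 : E) ∉ S) :
    ∃ e : E, ∀ y ∈ S, ⟪y, e⟫ < 0 := by
  obtain ⟨f, u, hf0, hfS⟩ := geometric_hahn_banach_point_closed hconv hclosed h0
  refine ⟨-(InnerProductSpace.toDual ℝ E).symm f, fun y hy => ?_⟩
  rw [inner_neg_right, real_inner_comm, InnerProductSpace.toDual_symm_apply]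
  have := hfS y hy
  rw [map_zero] at hf0
  linarith

theorem exists_separating_normals_of_biInter_eq_empty [FiniteDimensional ℝ E] {s : Finset ι}
    {T : ι → Set E} (hT : ∀ i, IsCompact (T i)) (hconv : ∀ i, Convex ℝ (T i))
    (hne : ∀ i, (T i).Nonempty) (hempty : ⋂ i ∈ s, T i = ∅) :
    ∃ v₀ : E, ∃ U : Finset E, U.card ≤ s.card ∧ (0 : E) ∈ convexHull ℝ (U : Set E) ∧
      ∀ u ∈ U, ∃ i ∈ s, ∀ x ∈ T i, ⟪u, x - v₀⟫ < 0 := by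
  classical
  have hs : s.Nonempty := Finset.nonempty_iff_ne_empty.2 fun h => by simp [h] at hempty
  obtain ⟨v₀, hmin⟩ := exists_forall_sup'_infDist_le hs hT hne
  set r := s.sup' hs fun i => infDist v₀ (T i)
  choose p hpT hpd using fun i => (hT i).exists_infDist_eq_dist (hne i) v₀
  set A := s.filter fun i => infDist v₀ (T i) = r
  have hr : 0 < r := by
    by_contra! hr
    suffices v₀ ∈ ⋂ i ∈ s, T i by simp [hempty] at this
    refine mem_iInter₂.2 fun i hi => ((hT i).isClosed.mem_iff_infDist_zero (hne i)).2 ?_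
    exact le_antisymm ((Finset.le_sup' (fun i => infDist v₀ (T i)) hi).trans hr) infDist_nonneg
  refine ⟨v₀, A.image fun i => v₀ - p i, Finset.card_image_le.trans (Finset.card_filter_le _ _),
    ?_, ?_⟩
  · by_contra h0
    obtain ⟨e, he⟩ := exists_forall_inner_neg_of_zero_notMem (convex_convexHull ℝ _)
      ((Finset.finite_toSet _).isClosed_convexHull (𝕜 := ℝ)) h0
    have hdescent : ∀ᶠ t in 𝓝[>] (0 : ℝ), ∀ i ∈ s, infDist (v₀ + t • e) (T i) < r := by
      refine (Finset.eventually_all s).2 fun i hi => ?_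
      by_cases hiA : i ∈ A
      · rw [← (Finset.mem_filter.1 hiA).2]
        refine eventually_infDist_add_smul_lt (hpT i) (hpd i) (he _ (subset_convexHull ℝ _ ?_))
        exact Finset.mem_coe.2 (Finset.mem_image_of_mem _ hiA)
      · have hlt : infDist v₀ (T i) < r := (Finset.le_sup' (fun i => infDist v₀ (T i)) hi).lt_of_ne
          fun h => hiA (Finset.mem_filter.2 ⟨hi, h⟩)
        have hcont : Continuous fun t : ℝ => infDist (v₀ + t • e) (T i) := by fun_prop
        exact (hcont.tendsto' 0 _ (by simp)).mono_left nhdsWithin_le_nhds |>.eventually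
          (gt_mem_nhds hlt)
    obtain ⟨t, ht⟩ := hdescent.exists
    exact (hmin (v₀ + t • e)).not_gt ((Finset.sup'_lt_iff hs).2 ht)
  · simp only [Finset.mem_image]
    rintro _ ⟨i, hiA, rfl⟩
    obtain ⟨hi, hir⟩ := Finset.mem_filter.1 hiA
    have hv₀p : v₀ ≠ p i := fun h => hr.ne (by rw [← hir, hpd i, h, dist_self])
    exact ⟨i, hi, fun x => inner_sub_neg_of_dist_eq_infDist (hconv i) (hpT i) (hpd i).symm hv₀p⟩

theorem Submodule.not_exists_forall_mem_starProjection_image (ξ : Submodule ℝ E)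
    [ξ.HasOrthogonalProjection] {s : Finset ι} {T : ι → Set E} {v₀ : E} {U : Set E}
    (hUξ : U ⊆ ξ) (h0 : (0 : E) ∈ convexHull ℝ U)
    (hsep : ∀ u ∈ U, ∃ i ∈ s, ∀ x ∈ T i, ⟪u, x - v₀⟫ < 0) :
    ¬ ∃ v, ∀ i ∈ s, v ∈ ξ.starProjection '' T i := by
  rintro ⟨v, hv⟩
  have hU : U ⊆ {u | ⟪u, v - v₀⟫ < 0} := by
    intro u hu
    obtain ⟨i, hi, hiT⟩ := hsep u hu
    obtain ⟨x, hx, rfl⟩ := hv i hi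
    have hproj : ⟪u, ξ.starProjection x⟫ = ⟪u, x⟫ := by
      rw [← inner_starProjection_left_eq_right, ξ.starProjection_eq_self_iff.2 (hUξ hu)]
    simpa only [mem_ofPred_eq, inner_sub_right, hproj] using hiT x hx
  have hconv : Convex ℝ {u | ⟪u, v - v₀⟫ < 0} :=
    convex_halfSpace_lt ⟨fun _ _ => inner_add_left _ _ _, fun _ _ => real_inner_smul_left _ _ _⟩ 0
  simpa using convexHull_min hU hconv h0

end InnerProductSpace

theorem stmt_6_general {n : ℕ} (d : ℕ) (hdn : d < n)
    (L Q : Set (EuclideanSpace ℝ (Fin n)))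
    (hLne : L.Nonempty) (hLcp : IsCompact L) (hLcv : Convex ℝ L)
    (hQ : ∃ s : Finset (EuclideanSpace ℝ (Fin n)), s.card ≤ d + 1 ∧
      Q = convexHull ℝ (↑s : Set (EuclideanSpace ℝ (Fin n))))
    (h : ∀ ξ : Submodule ℝ (EuclideanSpace ℝ (Fin n)), Module.finrank ℝ ξ = d →
      ∃ v ∈ ξ, (fun x => x + v) '' (projSub ξ '' Q) ⊆ projSub ξ '' L) :
    ∃ v₀ : EuclideanSpace ℝ (Fin n), (fun x => x + v₀) '' Q ⊆ L := by
  obtain ⟨s, hcard, rfl⟩ := hQ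
  set T : EuclideanSpace ℝ (Fin n) → Set (EuclideanSpace ℝ (Fin n)) := fun q => (q + ·) ⁻¹' L
  suffices hT : (⋂ q ∈ s, T q).Nonempty by
    obtain ⟨v₀, hv₀⟩ := hT
    refine ⟨v₀, image_subset_iff.2 (convexHull_min (fun q hq => ?_)
      (hLcv.translate_preimage_left v₀))⟩
    exact mem_iInter₂.1 hv₀ q hq
  by_contra hempty
  obtain ⟨v₀, U, hUcard, h0U, hsep⟩ := exists_separating_normals_of_biInter_eq_empty
    (T := T) (fun q => (Homeomorph.addLeft q).isCompact_preimage.2 hLcp)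
    hLcv.translate_preimage_right (fun q => hLne.preimage (add_left_surjective q))
    (not_nonempty_iff_eq_empty.1 hempty)
  have hspan := finrank_span_lt_card_of_zero_mem_affineSpan (convexHull_subset_affineSpan _ h0U)
  obtain ⟨ξ, hUξ, hξ⟩ := Submodule.exists_le_finrank_eq _
    (Nat.lt_succ_iff.1 (hspan.trans_le (hUcard.trans hcard)))
    (by rw [finrank_euclideanSpace_fin]; omega)
  obtain ⟨v, -, hv⟩ := h ξ hξ
  refine ξ.not_exists_forall_mem_starProjection_image (Submodule.subset_span.trans hUξ) h0U hsep
    ⟨v, fun q hq => ?_⟩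
  obtain ⟨y, hyL, hy⟩ := hv ⟨projSub ξ q, ⟨q, subset_convexHull ℝ _ hq, rfl⟩, rfl⟩
  refine ⟨y - q, by simpa [T] using hyL, ?_⟩
  simp only [projSub, ← Submodule.starProjection_apply] at hy
  rw [map_sub, hy, add_sub_cancel_left]

/-- d-shadow covering for a polytope with at most d+1 vertices implies containment. -/
theorem stmt_6 {n : ℕ} (hn : 1 ≤ n) (d : ℕ) (hd1 : 1 ≤ d) (hdn : d < n)
    (L Q : Set (EuclideanSpace ℝ (Fin n)))
    (hLne : L.Nonempty) (hLcp : IsCompact L) (hLcv : Convex ℝ L)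
    (hQ : ∃ s : Finset (EuclideanSpace ℝ (Fin n)), s.card ≤ d + 1 ∧
      Q = convexHull ℝ (↑s : Set (EuclideanSpace ℝ (Fin n))))
    (h : ∀ ξ : Submodule ℝ (EuclideanSpace ℝ (Fin n)), Module.finrank ℝ ξ = d →
      ∃ v ∈ ξ, (fun x => x + v) '' (projSub ξ '' Q) ⊆ projSub ξ '' L) :
    ∃ v₀ : EuclideanSpace ℝ (Fin n), (fun x => x + v₀) '' Q ⊆ L :=
  stmt_6_general d hdn L Q hLne hLcp hLcv hQ h
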